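/- arXiv:1806.06677 — 4 statements merged into one kernel-verified Lean document; each statement's English description precedes it below -/
import Mathlib

section
/- Let A be a complex unital Banach algebra and τ : A → ℂ a continuous linear functional with the trace property τ(ab) = τ(ba) for all a, b ∈ A. Let p : ℝ → A be a continuously differentiable path such that p(t)² = p(t) for all t. Then τ(p(t)) is constant in t: τ(p(t)) = τ(p(0)) for all t ∈ ℝ. -/
/-! Differentiating `p² = p` gives `p' = p'p + pp'`, and multiplying this by `p` on both sides
yields `pp'p = 0`. The trace property turns `τ(pp')` into `τ(p·pp') = τ(pp'p) = 0`, and likewise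
`τ(p'p) = 0`, so `τ(p') = 0`: the function `t ↦ τ(p t)` has vanishing derivative everywhere. -/

open Filter Topology

theorem IsIdempotentElem.mul_mul_eq_zero_of_eq_mul_add_mul {R : Type*} [Ring R] {q d : R}
    (hq : IsIdempotentElem q) (hd : d = d * q + q * d) : q * d * q = 0 := by
  have h : q * d * q = q * d * q + q * d * q :=
    calc q * d * q = q * (d * q + q * d) * q := by rw [← hd]
      _ = q * d * (q * q) + q * q * d * q := by noncomm_ring
      _ = q * d * q + q * d * q := by rw [hq.eq]
  simpa using h

theorem IsIdempotentElem.map_eq_zero_of_eq_mul_add_mul {R M F : Type*} [Ring R]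
    [AddCommMonoid M] [FunLike F R M] [AddMonoidHomClass F R M] {τ : F}
    (htr : ∀ a b, τ (a * b) = τ (b * a)) {q d : R} (hq : IsIdempotentElem q)
    (hd : d = d * q + q * d) : τ d = 0 := by
  have hqdq := hq.mul_mul_eq_zero_of_eq_mul_add_mul hd
  have hdq : τ (d * q) = 0 :=
    calc τ (d * q) = τ (d * q * q) := by rw [mul_assoc, hq.eq]
      _ = τ (q * (d * q)) := htr _ _
      _ = 0 := by rw [← mul_assoc, hqdq, map_zero]
  have hqd : τ (q * d) = 0 :=
    calc τ (q * d) = τ (q * (q * d)) := by rw [← mul_assoc, hq.eq]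
      _ = τ (q * d * q) := htr _ _
      _ = 0 := by rw [hqdq, map_zero]
  rw [hd, map_add, hdq, hqd, add_zero]

theorem HasDerivAt.eq_mul_add_mul_of_isIdempotentElem {𝕜 A : Type*}
    [NontriviallyNormedField 𝕜] [NormedRing A] [NormedAlgebra 𝕜 A] {p : 𝕜 → A} {p' : A}
    {t : 𝕜} (hp : HasDerivAt p p' t)
    (hidem : ∀ᶠ s in 𝓝 t, IsIdempotentElem (p s)) : p' = p' * p t + p t * p' :=
  hp.unique ((hp.mul hp).congr_of_eventuallyEq (hidem.mono fun _ hs => hs.eq.symm))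

theorem trace_of_idempotent_path_constant_general
    {A : Type*} [NormedRing A] [NormedAlgebra ℂ A]
    (τ : A →L[ℂ] ℂ) (htr : ∀ a b : A, τ (a * b) = τ (b * a))
    (p : ℝ → A) (hp : ContDiff ℝ 1 p) (hidem : ∀ t : ℝ, p t * p t = p t) :
    ∀ t : ℝ, τ (p t) = τ (p 0) := by
  have hderiv : ∀ t, HasDerivAt (fun s => τ (p s)) 0 t := fun t => by
    have hpt := (hp.differentiable one_ne_zero t).hasDerivAt
    have hd := hpt.eq_mul_add_mul_of_isIdempotentElem (Eventually.of_forall hidem)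
    have hτp' : τ (deriv p t) = 0 :=
      IsIdempotentElem.map_eq_zero_of_eq_mul_add_mul htr (hidem t) hd
    have hτ := (τ.restrictScalars ℝ).hasFDerivAt.comp_hasDerivAt t hpt
    rwa [ContinuousLinearMap.coe_restrictScalars', hτp'] at hτ
  exact fun t => is_const_of_deriv_eq_zero (fun s => (hderiv s).differentiableAt)
    (fun s => (hderiv s).deriv) t 0

/-- **Homotopy invariance of the trace of a path of idempotents.**
Let `A` be a complex unital Banach algebra and `τ : A → ℂ` a continuous linear functional
with the trace property `τ(ab) = τ(ba)`.  If `p : ℝ → A` is a continuously differentiable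
path of idempotents (`p(t)² = p(t)` for all `t`), then `τ(p(t))` is constant:
`τ(p(t)) = τ(p(0))` for all `t`. -/
theorem trace_of_idempotent_path_constant
    {A : Type*} [NormedRing A] [NormedAlgebra ℂ A] [CompleteSpace A]
    (τ : A →L[ℂ] ℂ) (htr : ∀ a b : A, τ (a * b) = τ (b * a))
    (p : ℝ → A) (hp : ContDiff ℝ 1 p) (hidem : ∀ t : ℝ, p t * p t = p t) :
    ∀ t : ℝ, τ (p t) = τ (p 0) :=
  trace_of_idempotent_path_constant_general τ htr p hp hidem
end

section
/- Let A be a complex unital Banach algebra and τ : A → ℂ a continuous linear functional with the trace property τ(ab) = τ(ba). Let u : ℝ × ℝ → A be a twice continuously differentiable map such that u(s, t) is invertible in A for all (s, t) and u(s, t + 2π) = u(s, t) for all s, t. Then the quantity Ch(s) = ∫₀^{2π} τ( u(s,t)⁻¹ · ∂_t u(s,t) ) dt is independent of s; that is, the odd Chern number Ch_{{0}} is invariant under smooth homotopies of loops of invertible elements. -/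
/-!
The integrand is the `t`-component of the 1-form `α = τ(u⁻¹ du)`. This form is
closed: differentiating `τ(u⁻¹ ∂_y u)` in direction `w` gives
`τ(u⁻¹ ∂_w ∂_y u) - τ(u⁻¹ ∂_w u · u⁻¹ ∂_y u)`, which is symmetric in `w, y` by the symmetry of
second derivatives and the trace property. Hence `∂_s α_t = ∂_t α_s`, so differentiating
`Ch(s) = ∫₀^{2π} α_t(s, t) dt` under the integral sign gives `∫₀^{2π} ∂_t α_s(s, t) dt`,
which vanishes because `α_s(s, ·)` is `2π`-periodic.
-/

open scoped Real Ring

section Slices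

variable {E : Type*} [NormedAddCommGroup E] [NormedSpace ℝ E]

theorem hasDerivAt_intervalIntegral_of_hasDerivAt_slice {F F' : ℝ × ℝ → E}
    (hF : Continuous F) (hF' : Continuous F')
    (hderiv : ∀ s t, HasDerivAt (fun x => F (x, t)) (F' (s, t)) s) (a b s₀ : ℝ) :
    HasDerivAt (fun s => ∫ t in a..b, F (s, t)) (∫ t in a..b, F' (s₀, t)) s₀ := by
  have slice : ∀ {G : ℝ × ℝ → E}, Continuous G → ∀ s, Continuous fun t => G (s, t) :=
    fun hG s => hG.comp (continuous_const.prodMk continuous_id)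
  obtain ⟨C, hC⟩ := ((isCompact_closedBall s₀ 1).prod isCompact_uIcc).exists_bound_of_continuousOn
    hF'.continuousOn
  exact (intervalIntegral.hasDerivAt_integral_of_dominated_loc_of_deriv_le
    (bound := fun _ => C) (Metric.ball_mem_nhds s₀ one_pos)
    (.of_forall fun s => (slice hF s).aestronglyMeasurable)
    ((slice hF s₀).intervalIntegrable a b) (slice hF' s₀).aestronglyMeasurable
    (.of_forall fun t ht x hx =>
      hC (x, t) ⟨Metric.ball_subset_closedBall hx, Set.uIoc_subset_uIcc ht⟩)
    intervalIntegrable_const (.of_forall fun t _ x _ => hderiv x t)).2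

theorem intervalIntegral_slice_eq_of_mixed_partials [CompleteSpace E] {g h k : ℝ × ℝ → E}
    {a b : ℝ} (hh : Continuous h) (hk : Continuous k)
    (hhs : ∀ s t, HasDerivAt (fun x => h (x, t)) (k (s, t)) s)
    (hgt : ∀ s t, HasDerivAt (fun y => g (s, y)) (k (s, t)) t)
    (hper : ∀ s, g (s, a) = g (s, b)) (s₁ s₂ : ℝ) :
    ∫ t in a..b, h (s₁, t) = ∫ t in a..b, h (s₂, t) := by
  have hk_int : ∀ s, ∫ t in a..b, k (s, t) = 0 := fun s => by
    rw [intervalIntegral.integral_eq_sub_of_hasDerivAt (fun t _ => hgt s t)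
      ((hk.comp (continuous_const.prodMk continuous_id)).intervalIntegrable a b), hper, sub_self]
  have hderiv s := hasDerivAt_intervalIntegral_of_hasDerivAt_slice hh hk hhs a b s
  exact is_const_of_deriv_eq_zero (fun s => (hderiv s).differentiableAt)
    (fun s => (hderiv s).deriv.trans (hk_int s)) s₁ s₂

variable {u : ℝ × ℝ → E} {u' : ℝ × ℝ →L[ℝ] E} {s t : ℝ}

theorem HasFDerivAt.hasDerivAt_slice_fst (hu : HasFDerivAt u u' (s, t)) :
    HasDerivAt (fun x => u (x, t)) (u' (1, 0)) s :=
  hu.comp_hasDerivAt s ((hasDerivAt_id s).prodMk (hasDerivAt_const s t))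

theorem HasFDerivAt.hasDerivAt_slice_snd (hu : HasFDerivAt u u' (s, t)) :
    HasDerivAt (fun y => u (s, y)) (u' (0, 1)) t :=
  hu.comp_hasDerivAt t ((hasDerivAt_const t s).prodMk (hasDerivAt_id t))

theorem fderiv_apply_fst_eq_of_slice_eq (hu : Differentiable ℝ u) {a b : ℝ}
    (hab : ∀ x, u (x, a) = u (x, b)) (s : ℝ) :
    fderiv ℝ u (s, a) (1, 0) = fderiv ℝ u (s, b) (1, 0) := by
  have hb := (hu (s, b)).hasFDerivAt.hasDerivAt_slice_fst
  simp only [← hab] at hb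
  exact (hu (s, a)).hasFDerivAt.hasDerivAt_slice_fst.unique hb

end Slices

section RingInverse

variable {A : Type*} [NormedRing A] [HasSummableGeomSeries A]

theorem Continuous.ringInverse {X : Type*} [TopologicalSpace X] {f : X → A} (hf : Continuous f)
    (hunit : ∀ x, IsUnit (f x)) : Continuous fun x => (f x)⁻¹ʳ :=
  continuous_iff_continuousAt.2 fun x => by
    obtain ⟨w, hw⟩ := hunit x
    exact (hw ▸ NormedRing.inverse_continuousAt w).comp hf.continuousAt

theorem HasDerivAt.ringInverse [NormedAlgebra ℝ A] {f : ℝ → A} {f' : A} {r : ℝ}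
    (hf : HasDerivAt f f' r) (hr : IsUnit (f r)) :
    HasDerivAt (fun x => (f x)⁻¹ʳ) (-((f r)⁻¹ʳ * f' * (f r)⁻¹ʳ)) r := by
  obtain ⟨w, hw⟩ := hr
  simpa [← hw] using (hw ▸ hasFDerivAt_ringInverse (𝕜 := ℝ) w).comp_hasDerivAt r hf

end RingInverse

section TraceLogForm

variable {E A F : Type*} [NormedAddCommGroup E] [NormedSpace ℝ E] [NormedRing A]
  [NormedAlgebra ℝ A] [NormedAddCommGroup F] [NormedSpace ℝ F]
  (τ : A →L[ℝ] F) (u : E → A)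

noncomputable def traceLogForm (p y : E) : F :=
  τ ((u p)⁻¹ʳ * fderiv ℝ u p y)

noncomputable def traceLogFormDeriv (p w y : E) : F :=
  τ ((u p)⁻¹ʳ * fderiv ℝ (fderiv ℝ u) p w y) -
    τ ((u p)⁻¹ʳ * fderiv ℝ u p w * ((u p)⁻¹ʳ * fderiv ℝ u p y))

variable {τ u}

theorem hasDerivAt_traceLogForm_comp [HasSummableGeomSeries A] (hu : ContDiff ℝ 2 u)
    {γ : ℝ → E} {w : E} {r : ℝ} (hγ : HasDerivAt γ w r) (hr : IsUnit (u (γ r))) (y : E) :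
    HasDerivAt (fun x => traceLogForm τ u (γ x) y) (traceLogFormDeriv τ u (γ r) w y) r := by
  have hu' : HasDerivAt (fun x => u (γ x)) (fderiv ℝ u (γ r) w) r :=
    ((hu.differentiable two_ne_zero) (γ r)).hasFDerivAt.comp_hasDerivAt r hγ
  have hDu : HasDerivAt (fun x => fderiv ℝ u (γ x) y) (fderiv ℝ (fderiv ℝ u) (γ r) w y) r := by
    have hD := ((hu.fderiv_right (by norm_num)).differentiable one_ne_zero (γ r)).hasFDerivAt
    simpa using (hD.comp_hasDerivAt r hγ).clm_apply (hasDerivAt_const r y)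
  refine (τ.hasFDerivAt.comp_hasDerivAt r ((hu'.ringInverse hr).fun_mul hDu)).congr_deriv ?_
  rw [traceLogFormDeriv, ← map_sub]
  congr 1
  noncomm_ring

theorem traceLogFormDeriv_comm (htr : ∀ a b, τ (a * b) = τ (b * a)) (hu : ContDiff ℝ 2 u)
    (p w y : E) : traceLogFormDeriv τ u p w y = traceLogFormDeriv τ u p y w := by
  rw [traceLogFormDeriv, traceLogFormDeriv, htr ((u p)⁻¹ʳ * fderiv ℝ u p w),
    hu.contDiffAt.isSymmSndFDerivAt (by simp) w y]

theorem continuous_traceLogForm [HasSummableGeomSeries A] (hu : ContDiff ℝ 2 u)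
    (hinv : ∀ p, IsUnit (u p)) (y : E) : Continuous fun p => traceLogForm τ u p y := by
  have hv := hu.continuous.ringInverse hinv
  have hD := hu.continuous_fderiv two_ne_zero
  unfold traceLogForm
  fun_prop

theorem continuous_traceLogFormDeriv [HasSummableGeomSeries A] (hu : ContDiff ℝ 2 u)
    (hinv : ∀ p, IsUnit (u p)) (w y : E) : Continuous fun p => traceLogFormDeriv τ u p w y := by
  have hv := hu.continuous.ringInverse hinv
  have hD := hu.continuous_fderiv two_ne_zero
  have hD2 := (hu.fderiv_right (by norm_num)).continuous_fderiv one_ne_zero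
  unfold traceLogFormDeriv
  fun_prop

end TraceLogForm

open scoped Real in
/-- **Homotopy invariance of the odd Chern number `Ch₍₀₎`.**
Let `A` be a complex unital Banach algebra and `τ : A → ℂ` a continuous linear functional
with the trace property.  If `u : ℝ × ℝ → A` is a twice continuously differentiable map
with `u(s,t)` invertible for all `(s,t)` and `u(s, t + 2π) = u(s, t)`, then the winding
number `Ch(s) = ∫₀^{2π} τ(u(s,t)⁻¹ ∂_t u(s,t)) dt` is independent of `s`. -/
theorem oddChernNumber_homotopy_invariant
    {A : Type*} [NormedRing A] [NormedAlgebra ℂ A] [CompleteSpace A]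
    (τ : A →L[ℂ] ℂ) (htr : ∀ a b : A, τ (a * b) = τ (b * a))
    (u : ℝ × ℝ → A) (hu : ContDiff ℝ 2 u)
    (hinv : ∀ s t : ℝ, IsUnit (u (s, t)))
    (hper : ∀ s t : ℝ, u (s, t + 2 * π) = u (s, t)) :
    ∀ s₁ s₂ : ℝ,
      (∫ t in (0 : ℝ)..(2 * π),
        τ (Ring.inverse (u (s₁, t)) * deriv (fun t' => u (s₁, t')) t)) =
      (∫ t in (0 : ℝ)..(2 * π),
        τ (Ring.inverse (u (s₂, t)) * deriv (fun t' => u (s₂, t')) t)) := by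
  intro s₁ s₂
  let τᵣ := τ.restrictScalars ℝ
  have hunit : ∀ p, IsUnit (u p) := fun p => hinv p.1 p.2
  have hdiff := hu.differentiable two_ne_zero
  have hs : ∀ s t, HasDerivAt (fun x => traceLogForm τᵣ u (x, t) (0, 1))
      (traceLogFormDeriv τᵣ u (s, t) (1, 0) (0, 1)) s := fun s t =>
    hasDerivAt_traceLogForm_comp hu ((hasDerivAt_id s).prodMk (hasDerivAt_const s t))
      (hunit _) _
  have ht : ∀ s t, HasDerivAt (fun y => traceLogForm τᵣ u (s, y) (1, 0))
      (traceLogFormDeriv τᵣ u (s, t) (1, 0) (0, 1)) t := fun s t => by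
    rw [traceLogFormDeriv_comm htr hu]
    exact hasDerivAt_traceLogForm_comp hu ((hasDerivAt_const t s).prodMk (hasDerivAt_id t))
      (hunit _) _
  have hperiodic : ∀ s, traceLogForm τᵣ u (s, 0) (1, 0) = traceLogForm τᵣ u (s, 2 * π) (1, 0) :=
    fun s => by
      have hslice : ∀ x, u (x, 0) = u (x, 2 * π) := fun x => by simpa using (hper x 0).symm
      rw [traceLogForm, traceLogForm, hslice, fderiv_apply_fst_eq_of_slice_eq hdiff hslice]
  have hderiv : ∀ s t, deriv (fun t' => u (s, t')) t = fderiv ℝ u (s, t) (0, 1) := fun s t =>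
    (hdiff (s, t)).hasFDerivAt.hasDerivAt_slice_snd.deriv
  simp only [hderiv]
  exact intervalIntegral_slice_eq_of_mixed_partials
    (g := fun p => traceLogForm τᵣ u p (1, 0)) (continuous_traceLogForm hu hunit _)
    (continuous_traceLogFormDeriv hu hunit _ _) hs ht hperiodic s₁ s₂
end

section
/- Let A be a unital C*-algebra, p : ℝ → A a continuously differentiable path of orthogonal projections (p(t)* = p(t), p(t)² = p(t) for all t), and v : ℝ → A a differentiable solution of the monodromy equation v'(t) = [p'(t), p(t)]·v(t) with v(0) = p(0). Then v(t)* · v(t) = p(0) for all t ∈ ℝ. In particular v(t) is a partial isometry: v(t) v(t)* v(t) = v(t). -/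
/-!
The generator `[p', p]` is skew-adjoint, because `p` and (hence) `p'` are self-adjoint; so along
any solution of `v' = [p', p] v` the derivative `(v*)' v + v* v'` of `v* v` vanishes and
`v(t)* v(t) = v(0)* v(0) = p(0)`. An element whose `a* a` is a projection is a partial isometry:
the C*-identity applied to `a - a a* a` shows that it is zero.
-/

theorem isSelfAdjoint_deriv {F : Type*} [NormedAddCommGroup F] [NormedSpace ℝ F]
    [StarAddMonoid F] [StarModule ℝ F] [ContinuousStar F] {f : ℝ → F}
    (hf : ∀ t, IsSelfAdjoint (f t)) (t : ℝ) : IsSelfAdjoint (deriv f t) := by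
  have hstar : (fun s => star (f s)) = f := funext hf
  rw [IsSelfAdjoint, ← deriv.star, hstar]

theorem IsSelfAdjoint.star_mul_sub_mul {R : Type*} [Ring R] [StarRing R] {a b : R}
    (ha : IsSelfAdjoint a) (hb : IsSelfAdjoint b) :
    star (a * b - b * a) = -(a * b - b * a) := by
  rw [star_sub, star_mul, star_mul, ha.star_eq, hb.star_eq, neg_sub]

theorem star_mul_self_eq_of_hasDerivAt_mul {A : Type*} [NormedRing A] [NormedAlgebra ℝ A]
    [StarRing A] [StarModule ℝ A] [ContinuousStar A] {G v : ℝ → A}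
    (hG : ∀ t, star (G t) = -G t) (hv : ∀ t, HasDerivAt v (G t * v t) t) (t s : ℝ) :
    star (v t) * v t = star (v s) * v s := by
  have hderiv : ∀ t, HasDerivAt (fun s => star (v s) * v s) 0 t := by
    intro t
    convert (hv t).star.fun_mul (hv t) using 1
    rw [star_mul, hG, mul_neg, neg_mul, mul_assoc, neg_add_cancel]
  exact is_const_of_deriv_eq_zero (fun s => (hderiv s).differentiableAt)
    (fun s => (hderiv s).deriv) t s

theorem mul_star_mul_eq_self_of_isIdempotentElem_star_mul_self {E : Type*}
    [NonUnitalNormedRing E] [StarRing E] [CStarRing E] {a : E}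
    (h : IsIdempotentElem (star a * a)) : a * star a * a = a := by
  set q := star a * a with hq
  have hq_sa : star q = q := (IsSelfAdjoint.star_mul_self a).star_eq
  have hzero : star (a - a * q) * (a - a * q) = 0 := by
    have hexpand : star (a - a * q) * (a - a * q) = (q - q * q) - (q - q * q) * q := by
      rw [star_sub, star_mul, hq_sa, hq]
      noncomm_ring
    rw [hexpand, h.eq, sub_self, zero_mul, sub_zero]
  rw [CStarRing.star_mul_self_eq_zero_iff, sub_eq_zero] at hzero
  rw [mul_assoc, ← hq, ← hzero]

theorem monodromy_star_mul_self_general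
    {A : Type*} [CStarAlgebra A]
    (p : ℝ → A)
    (hsa : ∀ t : ℝ, star (p t) = p t) (hidem : ∀ t : ℝ, p t * p t = p t)
    (v : ℝ → A)
    (hv : ∀ t : ℝ, HasDerivAt v ((deriv p t * p t - p t * deriv p t) * v t) t)
    (hv0 : v 0 = p 0) :
    ∀ t : ℝ, star (v t) * v t = p 0 ∧ v t * star (v t) * v t = v t := by
  have hskew : ∀ t, star (deriv p t * p t - p t * deriv p t)
      = -(deriv p t * p t - p t * deriv p t) :=
    fun t => (isSelfAdjoint_deriv hsa t).star_mul_sub_mul (hsa t)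
  intro t
  have hinit : star (v t) * v t = p 0 := by
    rw [star_mul_self_eq_of_hasDerivAt_mul hskew hv t 0, hv0, hsa 0, hidem 0]
  refine ⟨hinit, mul_star_mul_eq_self_of_isIdempotentElem_star_mul_self ?_⟩
  rw [hinit]
  exact hidem 0

/-- **The monodromy of a path of projections is a partial isometry (initial projection).**
Let `A` be a unital C*-algebra, `p : ℝ → A` a continuously differentiable path of
orthogonal projections (`p(t)* = p(t)`, `p(t)² = p(t)`), and `v : ℝ → A` a differentiable
solution of the monodromy equation `v'(t) = [p'(t), p(t)]·v(t)` with `v(0) = p(0)`.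
Then `v(t)*·v(t) = p(0)` for all `t`; in particular `v(t) v(t)* v(t) = v(t)`. -/
theorem monodromy_star_mul_self
    {A : Type*} [CStarAlgebra A]
    (p : ℝ → A) (hp : ContDiff ℝ 1 p)
    (hsa : ∀ t : ℝ, star (p t) = p t) (hidem : ∀ t : ℝ, p t * p t = p t)
    (v : ℝ → A)
    (hv : ∀ t : ℝ, HasDerivAt v ((deriv p t * p t - p t * deriv p t) * v t) t)
    (hv0 : v 0 = p 0) :
    ∀ t : ℝ, star (v t) * v t = p 0 ∧ v t * star (v t) * v t = v t :=
  monodromy_star_mul_self_general p hsa hidem v hv hv0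
end

section
/- Let A be a unital C*-algebra and p : ℝ → A a continuously differentiable, 2π-periodic path of orthogonal projections (p(t)* = p(t), p(t)² = p(t), p(t + 2π) = p(t)). Define the time-reversed path p'(t) = p(−t). Let v be the monodromy of p and v' the monodromy of p', i.e., continuously differentiable solutions of ∂_t v(t) = [∂_t p(t), p(t)]·v(t), v(0) = p(0), and ∂_t v'(t) = [∂_t p'(t), p'(t)]·v'(t), v'(0) = p(0). Then v'(2π) = (v(2π))*. -/
open Set in
private lemma ode_zero {A : Type*} [NormedRing A] [NormedAlgebra ℝ A]
    (a b f : ℝ → A) (ha : Continuous a) (hb : Continuous b)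
    (hf : ∀ t, HasDerivAt f (a t * f t + f t * b t) t)
    (h0 : f 0 = 0) : ∀ t, f t = 0 := by
  intro T
  set M : ℝ := |T| + 1 with hM
  have hM0 : (0:ℝ) < M := by positivity
  have hTabs : |T| ≤ M := by simp [hM]
  have hTmem : T ∈ Icc (-M) M := by
    rcases abs_le.mp hTabs with ⟨h1, h2⟩; exact ⟨h1, h2⟩
  have h0mem : (0:ℝ) ∈ Ioo (-M) M := ⟨by linarith, hM0⟩
  set c : ℝ → ℝ := fun t => max (-M) (min M t) with hc
  have hceq : ∀ t ∈ Icc (-M) M, c t = t := by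
    intro t ht
    simp only [hc, min_eq_right ht.2, max_eq_right ht.1]
  have hcmem : ∀ t, c t ∈ Icc (-M) M :=
    fun t => ⟨le_max_left _ _, max_le (by linarith) (min_le_left _ _)⟩
  obtain ⟨C₁, hC₁⟩ := (isCompact_Icc (a := -M) (b := M)).exists_bound_of_continuousOn
    ha.continuousOn
  obtain ⟨C₂, hC₂⟩ := (isCompact_Icc (a := -M) (b := M)).exists_bound_of_continuousOn
    hb.continuousOn
  have hC₁0 : 0 ≤ C₁ := le_trans (norm_nonneg _) (hC₁ 0 ⟨by linarith, by linarith⟩)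
  have hC₂0 : 0 ≤ C₂ := le_trans (norm_nonneg _) (hC₂ 0 ⟨by linarith, by linarith⟩)
  set K : NNReal := (C₁ + C₂).toNNReal with hK
  have hlip : ∀ t, LipschitzOnWith K (fun x => a (c t) * x + x * b (c t)) univ := by
    intro t
    apply LipschitzWith.lipschitzOnWith
    apply LipschitzWith.of_dist_le_mul
    intro x y
    rw [dist_eq_norm, dist_eq_norm]
    have hrw : (a (c t) * x + x * b (c t)) - (a (c t) * y + y * b (c t))
        = a (c t) * (x - y) + (x - y) * b (c t) := by noncomm_ring
    rw [hrw]
    have hcm := hcmem t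
    calc ‖a (c t) * (x - y) + (x - y) * b (c t)‖
        ≤ ‖a (c t) * (x - y)‖ + ‖(x - y) * b (c t)‖ := norm_add_le _ _
      _ ≤ ‖a (c t)‖ * ‖x - y‖ + ‖x - y‖ * ‖b (c t)‖ :=
          add_le_add (norm_mul_le _ _) (norm_mul_le _ _)
      _ ≤ C₁ * ‖x - y‖ + ‖x - y‖ * C₂ := by
          gcongr
          · exact hC₁ _ hcm
          · exact hC₂ _ hcm
      _ = (C₁ + C₂) * ‖x - y‖ := by ring
      _ = (K : ℝ) * ‖x - y‖ := by
          rw [hK, Real.coe_toNNReal _ (add_nonneg hC₁0 hC₂0)]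
  have key := ODE_solution_unique_of_mem_Icc
    (v := fun t x => a (c t) * x + x * b (c t)) (s := fun _ => univ) (K := K)
    (fun t _ => hlip t) h0mem
    (f := f) (g := fun _ => 0)
    (continuous_iff_continuousAt.mpr fun t => (hf t).differentiableAt.continuousAt).continuousOn
    (fun t ht => by
      have := hceq t (Ioo_subset_Icc_self ht)
      simpa [this] using hf t)
    (fun _ _ => trivial)
    continuousOn_const
    (fun t ht => by simpa using hasDerivAt_const t (0 : A))
    (fun _ _ => trivial)
    (by simpa using h0)
  exact key hTmem

private lemma proj_leib {A : Type*} [NormedRing A] [NormedAlgebra ℝ A]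
    (q q' : ℝ → A) (hq : ∀ t, HasDerivAt q (q' t) t)
    (hidem : ∀ t, q t * q t = q t) (t : ℝ) :
    q' t = q' t * q t + q t * q' t := by
  have h1 : HasDerivAt (fun s => q s * q s) (q' t * q t + q t * q' t) t :=
    (hq t).mul (hq t)
  have h2 : (fun s => q s * q s) = q := funext hidem
  rw [h2] at h1
  exact (h1.unique (hq t)).symm

private lemma proj_mid {A : Type*} [NormedRing A] [NormedAlgebra ℝ A]
    (q q' : ℝ → A) (hq : ∀ t, HasDerivAt q (q' t) t)
    (hidem : ∀ t, q t * q t = q t) (t : ℝ) :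
    q t * q' t * q t = 0 := by
  have h := proj_leib q q' hq hidem t
  have h2 : q t * q' t * q t = q t * q' t * q t + q t * q' t * q t := by
    nth_rewrite 1 [h]
    rw [mul_add, add_mul]
    congr 1
    · rw [mul_assoc (q t) (q' t * q t) (q t), mul_assoc (q' t) (q t) (q t), hidem t,
        ← mul_assoc]
    · rw [← mul_assoc (q t) (q t) (q' t), hidem t]
  have h3 : q t * q' t * q t + 0 = q t * q' t * q t + q t * q' t * q t := by
    rw [add_zero]; exact h2
  exact (add_left_cancel h3).symm

private lemma proj_fixes {A : Type*} [NormedRing A] [NormedAlgebra ℝ A]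
    (q q' y : ℝ → A) (hq : ∀ t, HasDerivAt q (q' t) t) (hq'c : Continuous q')
    (hidem : ∀ t, q t * q t = q t)
    (hy : ∀ t, HasDerivAt y ((q' t * q t - q t * q' t) * y t) t)
    (h0 : (1 - q 0) * y 0 = 0) : ∀ t, q t * y t = y t := by
  have key : ∀ t, (1 - q t) * y t = 0 := by
    apply ode_zero (fun t => -q' t) (fun _ => 0) _ hq'c.neg continuous_const _ h0
    intro t
    have hd : HasDerivAt (fun s => (1 - q s) * y s)
        ((0 - q' t) * y t + (1 - q t) * ((q' t * q t - q t * q' t) * y t)) t :=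
      (((hasDerivAt_const t (1:A)).sub (hq t)).mul (hy t))
    have hval : (0 - q' t) * y t + (1 - q t) * ((q' t * q t - q t * q' t) * y t)
        = -q' t * ((1 - q t) * y t) + ((1 - q t) * y t) * 0 := by
      have hr : (0 - q' t) * y t + (1 - q t) * ((q' t * q t - q t * q' t) * y t)
          = -q' t * ((1 - q t) * y t) + ((1 - q t) * y t) * 0
            - (q t * q' t * q t) * y t + (q t * q t * q' t) * y t
            - (q t * q' t) * y t := by
        noncomm_ring
      rw [hr, proj_mid q q' hq hidem t, hidem t]
      noncomm_ring
    rw [hval] at hd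
    exact hd
  intro t
  have hk := key t
  rw [sub_mul, one_mul, sub_eq_zero] at hk
  exact hk.symm

open scoped Real in
/-- **Monodromy of the time-reversed cycle is the adjoint of the monodromy.**
Let `A` be a unital C*-algebra and `p : ℝ → A` a continuously differentiable
`2π`-periodic path of orthogonal projections.  Let `v` be the monodromy of `p` and `w`
the monodromy of the time-reversed path `p'(t) = p(−t)` (continuously differentiable
solutions of the respective monodromy equations with initial value `p(0)`).  Then
`w(2π) = (v(2π))*`. -/
theorem monodromy_time_reversed_eq_star
    {A : Type*} [CStarAlgebra A]
    (p : ℝ → A) (hp : ContDiff ℝ 1 p)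
    (hsa : ∀ t : ℝ, star (p t) = p t) (hidem : ∀ t : ℝ, p t * p t = p t)
    (hper : ∀ t : ℝ, p (t + 2 * π) = p t)
    (v : ℝ → A) (hv' : ContDiff ℝ 1 v)
    (hv : ∀ t : ℝ, HasDerivAt v ((deriv p t * p t - p t * deriv p t) * v t) t)
    (hv0 : v 0 = p 0)
    (w : ℝ → A) (hw' : ContDiff ℝ 1 w)
    (hw : ∀ t : ℝ, HasDerivAt w
      ((deriv (fun s => p (-s)) t * p (-t) - p (-t) * deriv (fun s => p (-s)) t) * w t) t)
    (hw0 : w 0 = p 0) :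
    w (2 * π) = star (v (2 * π)) := by
  have hpd : ∀ t, HasDerivAt p (deriv p t) t :=
    fun t => (hp.differentiable one_ne_zero t).hasDerivAt
  have hpc : Continuous p := hp.continuous
  have hdc : Continuous (deriv p) := hp.continuous_deriv le_rfl
  set K : ℝ → A := fun t => deriv p t * p t - p t * deriv p t with hKdef
  have hKc : Continuous K := (hdc.mul hpc).sub (hpc.mul hdc)
  -- self-adjointness of the derivative
  have hsad : ∀ t, star (deriv p t) = deriv p t := by
    intro t
    have h1 : HasDerivAt (fun s => star (p s)) (star (deriv p t)) t := (hpd t).star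
    have h2 : (fun s => star (p s)) = p := funext hsa
    rw [h2] at h1
    exact h1.unique (hpd t)
  have hKstar : ∀ t, star (K t) = -K t := by
    intro t
    simp only [hKdef, star_sub, star_mul, hsa, hsad]
    abel
  have hleib := proj_leib p (deriv p) hpd hidem
  have hmid := proj_mid p (deriv p) hpd hidem
  have hcomm : ∀ t, K t * p t - p t * K t = deriv p t := by
    intro t
    have h1 : K t * p t - p t * K t
        = deriv p t * (p t * p t) + (p t * p t) * deriv p t
          - p t * deriv p t * p t - p t * deriv p t * p t := by
      simp only [hKdef]; noncomm_ring
    rw [h1, hidem t, hmid t, sub_zero, sub_zero]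
    exact (hleib t).symm
  -- periodicity of the derivative and of K
  have hperd : ∀ t, deriv p (t + 2 * π) = deriv p t := by
    intro t
    have h1 : HasDerivAt (fun s => p (s + 2 * π)) (deriv p (t + 2 * π)) t :=
      HasDerivAt.comp_add_const t (2 * π) (hpd (t + 2 * π))
    have h2 : (fun s => p (s + 2 * π)) = p := funext hper
    rw [h2] at h1
    exact h1.unique (hpd t)
  have hKper : ∀ t, K (t + 2 * π) = K t := by
    intro t; simp only [hKdef, hper, hperd]
  have hp2 : p (2 * π) = p 0 := by
    have := hper 0; rwa [zero_add] at this
  have hpm2 : p (-(2 * π)) = p 0 := by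
    have := hper (-(2 * π)); rw [neg_add_cancel] at this; exact this.symm
  -- derivative of t ↦ v (-t)
  have hvneg : ∀ t, HasDerivAt (fun s => v (-s)) (-(K (-t) * v (-t))) t := by
    intro t
    have h1 := HasDerivAt.scomp (𝕜 := ℝ) t (hv (-t)) (hasDerivAt_neg t)
    simpa [Function.comp_def] using h1
  -- the derivative of the reversed path
  have hqd : ∀ t, HasDerivAt (fun s => p (-s)) (-(deriv p (-t))) t := by
    intro t
    have h1 := HasDerivAt.scomp (𝕜 := ℝ) t (hpd (-t)) (hasDerivAt_neg t)
    simpa [Function.comp_def] using h1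
  have hqderiv : ∀ t, deriv (fun s => p (-s)) t = -(deriv p (-t)) :=
    fun t => (hqd t).deriv
  have hwd : ∀ t, HasDerivAt w (-(K (-t)) * w t) t := by
    intro t
    have h := hw t
    rw [hqderiv t] at h
    have : (-(deriv p (-t)) * p (-t) - p (-t) * -(deriv p (-t))) * w t
        = -(K (-t)) * w t := by
      simp only [hKdef]; noncomm_ring
    rwa [this] at h
  -- P1 : p t * v t = v t
  have P1 : ∀ t, p t * v t = v t := by
    apply proj_fixes p (deriv p) v hpd hdc hidem hv
    rw [hv0, sub_mul, one_mul, hidem 0, sub_self]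
  -- P2 : p (-t) * w t = w t
  have P2 : ∀ t, p (-t) * w t = w t := by
    have := proj_fixes (fun t => p (-t)) (fun t => -(deriv p (-t))) w hqd
      ((hdc.comp continuous_neg).neg) (fun t => hidem (-t))
      (fun t => by
        have h := hw t
        rw [hqderiv t] at h
        exact h)
      (by simp only [neg_zero]; rw [hw0, sub_mul, one_mul, hidem 0, sub_self])
    exact this
  -- P3 : v t * p 0 = v t
  have P3 : ∀ t, v t * p 0 = v t := by
    have key : ∀ t, v t * (1 - p 0) = 0 := by
      apply ode_zero K (fun _ => 0) _ hKc continuous_const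
      · intro t
        have hd : HasDerivAt (fun s => v s * (1 - p 0)) ((K t * v t) * (1 - p 0)) t :=
          (hv t).mul_const (1 - p 0)
        have : (K t * v t) * (1 - p 0) = K t * (v t * (1 - p 0)) + (v t * (1 - p 0)) * 0 := by
          noncomm_ring
        rwa [this] at hd
      · rw [hv0, mul_sub, mul_one, hidem 0, sub_self]
    intro t
    have hk := key t
    rw [mul_sub, mul_one, sub_eq_zero] at hk
    exact hk.symm
  -- P4 : v t * star (v t) = p t
  have P4 : ∀ t, v t * star (v t) = p t := by
    have key : ∀ t, v t * star (v t) - p t = 0 := by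
      apply ode_zero K (fun t => -K t) _ hKc hKc.neg
      · intro t
        have hd : HasDerivAt (fun s => v s * star (v s) - p s)
            ((K t * v t) * star (v t) + v t * star (K t * v t) - deriv p t) t :=
          ((hv t).mul (hv t).star).sub (hpd t)
        have hval : (K t * v t) * star (v t) + v t * star (K t * v t) - deriv p t
            = K t * (v t * star (v t) - p t) + (v t * star (v t) - p t) * (-K t) := by
          rw [star_mul, hKstar t, ← hcomm t]
          noncomm_ring
        rwa [hval] at hd
      · rw [hv0, hsa 0, hidem 0, sub_self]
    intro t
    have hk := key t
    rwa [sub_eq_zero] at hk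
  -- P5 : v (t + 2π) = v t * v (2π)
  have P5 : ∀ t, v (t + 2 * π) = v t * v (2 * π) := by
    have key : ∀ t, v (t + 2 * π) - v t * v (2 * π) = 0 := by
      apply ode_zero K (fun _ => 0) _ hKc continuous_const
      · intro t
        have h1 : HasDerivAt (fun s => v (s + 2 * π))
            (K (t + 2 * π) * v (t + 2 * π)) t :=
          HasDerivAt.comp_add_const t (2 * π) (hv (t + 2 * π))
        have h2 : HasDerivAt (fun s => v s * v (2 * π)) ((K t * v t) * v (2 * π)) t :=
          (hv t).mul_const (v (2 * π))
        have hd := h1.sub h2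
        rw [hKper t] at hd
        have : K t * v (t + 2 * π) - (K t * v t) * v (2 * π)
            = K t * (v (t + 2 * π) - v t * v (2 * π))
              + (v (t + 2 * π) - v t * v (2 * π)) * 0 := by
          noncomm_ring
        rwa [this] at hd
      · rw [zero_add, hv0]
        have := P1 (2 * π)
        rw [hp2] at this
        rw [this, sub_self]
    intro t
    have hk := key t
    rwa [sub_eq_zero] at hk
  -- P6 : star (v (-t)) * w t = p 0
  have P6 : ∀ t, star (v (-t)) * w t = p 0 := by
    have key : ∀ t, star (v (-t)) * w t - p 0 = 0 := by
      apply ode_zero (fun _ => 0) (fun _ => 0) _ continuous_const continuous_const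
      · intro t
        have h1 : HasDerivAt (fun s => star (v (-s))) (star (-(K (-t) * v (-t)))) t :=
          (hvneg t).star
        have h2 : HasDerivAt (fun s => star (v (-s)) * w s)
            (star (-(K (-t) * v (-t))) * w t + star (v (-t)) * (-(K (-t)) * w t)) t :=
          h1.mul (hwd t)
        have hd := h2.sub_const (p 0)
        have hval : star (-(K (-t) * v (-t))) * w t + star (v (-t)) * (-(K (-t)) * w t)
            = 0 := by
          rw [star_neg, star_mul, hKstar]
          noncomm_ring
        rw [hval] at hd
        have : (0 : A) = 0 * (star (v (-t)) * w t - p 0)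
            + (star (v (-t)) * w t - p 0) * 0 := by noncomm_ring
        rwa [this] at hd
      · rw [neg_zero, hv0, hw0, hsa 0, hidem 0, sub_self]
    intro t
    have hk := key t
    rwa [sub_eq_zero] at hk
  -- assembly
  have e1 : star (v (-(2 * π))) * w (2 * π) = p 0 := P6 (2 * π)
  have e2 : p 0 = v (-(2 * π)) * v (2 * π) := by
    have h := P5 (-(2 * π))
    rw [neg_add_cancel, hv0] at h
    exact h
  have e3 : w (2 * π) = p 0 * w (2 * π) := by
    have h := P2 (2 * π)
    rw [hpm2] at h
    exact h.symm
  have step1 : p 0 * w (2 * π) = v (-(2 * π)) := by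
    rw [← hpm2, ← P4 (-(2 * π)), mul_assoc, e1]
    exact P3 (-(2 * π))
  have step2 : v (-(2 * π)) = star (v (2 * π)) := by
    calc v (-(2 * π)) = v (-(2 * π)) * p 0 := (P3 _).symm
      _ = v (-(2 * π)) * (v (2 * π) * star (v (2 * π))) := by rw [P4 (2 * π), hp2]
      _ = (v (-(2 * π)) * v (2 * π)) * star (v (2 * π)) := by rw [mul_assoc]
      _ = p 0 * star (v (2 * π)) := by rw [← e2]
      _ = star (v (2 * π) * p 0) := by rw [star_mul, hsa 0]
      _ = star (v (2 * π)) := by rw [P3 (2 * π)]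
  rw [e3, step1, step2]
end
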